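/- Let H₁, H₂ be finite-dimensional real vector spaces each equipped with a symmetric positive semi-definite bilinear form E₁, E₂ respectively, and let L₁ : H₁ → H₁ and L₂ : H₂ → H₂ be linear operators such that Eᵢ(Lᵢ f, Lᵢ f) ≤ δᵢ Eᵢ(f,f) for all f ∈ Hᵢ (i = 1,2), for some δ₁, δ₂ ≥ 0. Then the tensor product operator satisfies (E₁ ⊗ E₂)((L₁⊗L₂) f, (L₁⊗L₂) f) ≤ δ₁ δ₂ (E₁ ⊗ E₂)(f, f) for every f ∈ H₁ ⊗ H₂. -/

import Mathlib

/-!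
The Gram matrix of `A ⊗ B` in a product basis is the Kronecker product of the Gram matrices
of `A` and `B`, so tensor products of positive semidefinite forms are positive semidefinite.
The theorem follows from the decomposition
`δ₁δ₂ (E₁ ⊗ E₂) - E₁(L₁·, L₁·) ⊗ E₂(L₂·, L₂·)
  = (δ₁ E₁ - E₁(L₁·, L₁·)) ⊗ δ₂ E₂ + E₁(L₁·, L₁·) ⊗ (δ₂ E₂ - E₂(L₂·, L₂·))`,
whose two summands are tensor products of positive semidefinite forms.
-/

open TensorProduct
open scoped Kronecker

namespace LinearMap.BilinForm

section CommRing

variable {R V W : Type*} [CommRing R] [AddCommGroup V] [Module R V] [AddCommGroup W] [Module R W]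

theorem eq_tmul_of_apply_tmul_tmul {A : LinearMap.BilinForm R V} {B : LinearMap.BilinForm R W}
    {E : LinearMap.BilinForm R (V ⊗[R] W)}
    (h : ∀ v v' w w', E (v ⊗ₜ w) (v' ⊗ₜ w') = A v v' * B w w') : E = A.tmul B :=
  TensorProduct.ext' fun v w => TensorProduct.ext' fun v' w' => by
    rw [h, tensorDistrib_tmul, smul_eq_mul, mul_comm]

theorem tmul_compl₁₂_map (A : LinearMap.BilinForm R V) (B : LinearMap.BilinForm R W)
    (f : V →ₗ[R] V) (g : W →ₗ[R] W) :
    (A.tmul B).compl₁₂ (map f g) (map f g) = BilinForm.tmul (A.compl₁₂ f f) (B.compl₁₂ g g) :=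
  eq_tmul_of_apply_tmul_tmul fun v v' w w' => by simp [mul_comm]

theorem tmul_smul_smul (a b : R) (A : LinearMap.BilinForm R V) (B : LinearMap.BilinForm R W) :
    BilinForm.tmul (a • A) (b • B) = (a * b) • A.tmul B :=
  (eq_tmul_of_apply_tmul_tmul fun v v' w w' => by
    simp only [smul_apply, tensorDistrib_tmul, smul_eq_mul]
    ring).symm

theorem tmul_sub_tmul (A A' : LinearMap.BilinForm R V) (B B' : LinearMap.BilinForm R W) :
    A.tmul B - A'.tmul B' = (A - A').tmul B + A'.tmul (B - B') := by
  refine TensorProduct.ext' fun v w => TensorProduct.ext' fun v' w' => ?_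
  simp only [sub_apply, add_apply, tensorDistrib_tmul, smul_eq_mul]
  ring

theorem IsPosSemidef.compl₁₂_self [LE R] {A : LinearMap.BilinForm R V} (hA : A.IsPosSemidef)
    (L : V →ₗ[R] V) : IsPosSemidef (A.compl₁₂ L L) :=
  ⟨⟨fun v w => hA.isSymm.eq (L v) (L w)⟩, ⟨fun v => hA.isNonneg.nonneg (L v)⟩⟩

theorem isPosSemidef_smul_sub_compl₁₂_self [PartialOrder R] [IsOrderedAddMonoid R]
    {A : LinearMap.BilinForm R V} (hA : A.IsSymm) {L : V →ₗ[R] V} {δ : R}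
    (hL : ∀ v, A (L v) (L v) ≤ δ * A v v) : IsPosSemidef (δ • A - A.compl₁₂ L L) := by
  refine ⟨(hA.smul δ).sub ⟨fun v w => hA.eq (L v) (L w)⟩, ⟨fun v => ?_⟩⟩
  simpa [sub_nonneg] using hL v

end CommRing

variable {V W : Type*} [AddCommGroup V] [Module ℝ V] [AddCommGroup W] [Module ℝ W]

theorem toMatrix₂_tmul {ι κ : Type*} [Fintype ι] [Fintype κ] [DecidableEq ι] [DecidableEq κ]
    (b : Module.Basis ι ℝ V) (c : Module.Basis κ ℝ W) (A : LinearMap.BilinForm ℝ V)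
    (B : LinearMap.BilinForm ℝ W) :
    toMatrix₂ (b.tensorProduct c) (b.tensorProduct c) (A.tmul B) =
      toMatrix₂ b b A ⊗ₖ toMatrix₂ c c B := by
  ext ⟨i, j⟩ ⟨k, l⟩
  simp [toMatrix₂_apply, mul_comm]

variable [FiniteDimensional ℝ V] [FiniteDimensional ℝ W]

theorem IsPosSemidef.tmul {A : LinearMap.BilinForm ℝ V} {B : LinearMap.BilinForm ℝ W}
    (hA : A.IsPosSemidef) (hB : B.IsPosSemidef) : IsPosSemidef (A.tmul B) := by
  let b := Module.finBasis ℝ V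
  let c := Module.finBasis ℝ W
  rw [isPosSemidef_iff, LinearMap.isPosSemidef_iff_posSemidef_toMatrix b] at hA
  rw [isPosSemidef_iff, LinearMap.isPosSemidef_iff_posSemidef_toMatrix c] at hB
  rw [isPosSemidef_iff, LinearMap.isPosSemidef_iff_posSemidef_toMatrix (b.tensorProduct c),
    toMatrix₂_tmul]
  exact hA.kronecker hB

theorem IsPosSemidef.tmul_sub_tmul {A A' : LinearMap.BilinForm ℝ V}
    {B B' : LinearMap.BilinForm ℝ W} (hA' : A'.IsPosSemidef) (hB : B.IsPosSemidef)
    (hAA' : (A - A').IsPosSemidef) (hBB' : (B - B').IsPosSemidef) :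
    IsPosSemidef (A.tmul B - A'.tmul B') := by
  rw [LinearMap.BilinForm.tmul_sub_tmul]
  exact (hAA'.tmul hB).add (hA'.tmul hBB')

end LinearMap.BilinForm

open LinearMap.BilinForm

theorem stmt_3_general (H₁ H₂ : Type*)
    [AddCommGroup H₁] [Module ℝ H₁] [FiniteDimensional ℝ H₁]
    [AddCommGroup H₂] [Module ℝ H₂] [FiniteDimensional ℝ H₂]
    (E₁ : H₁ →ₗ[ℝ] H₁ →ₗ[ℝ] ℝ) (E₂ : H₂ →ₗ[ℝ] H₂ →ₗ[ℝ] ℝ)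
    (hE₁symm : ∀ v w, E₁ v w = E₁ w v) (hE₂symm : ∀ v w, E₂ v w = E₂ w v)
    (hE₁psd : ∀ v, 0 ≤ E₁ v v) (hE₂psd : ∀ v, 0 ≤ E₂ v v)
    (L₁ : H₁ →ₗ[ℝ] H₁) (L₂ : H₂ →ₗ[ℝ] H₂) (δ₁ δ₂ : ℝ)
    (hδ₂ : 0 ≤ δ₂)
    (hL₁ : ∀ f : H₁, E₁ (L₁ f) (L₁ f) ≤ δ₁ * E₁ f f)
    (hL₂ : ∀ f : H₂, E₂ (L₂ f) (L₂ f) ≤ δ₂ * E₂ f f)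
    (E : (H₁ ⊗[ℝ] H₂) →ₗ[ℝ] (H₁ ⊗[ℝ] H₂) →ₗ[ℝ] ℝ)
    (hE : ∀ (f₁ g₁ : H₁) (f₂ g₂ : H₂),
      E (f₁ ⊗ₜ f₂) (g₁ ⊗ₜ g₂) = E₁ f₁ g₁ * E₂ f₂ g₂) :
    ∀ f : H₁ ⊗[ℝ] H₂,
      E (TensorProduct.map L₁ L₂ f) (TensorProduct.map L₁ L₂ f) ≤ δ₁ * δ₂ * E f f := by
  intro f
  obtain rfl : E = LinearMap.BilinForm.tmul E₁ E₂ := eq_tmul_of_apply_tmul_tmul hE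
  have hE₁ : IsPosSemidef E₁ := ⟨⟨hE₁symm⟩, ⟨hE₁psd⟩⟩
  have hE₂ : IsPosSemidef E₂ := ⟨⟨hE₂symm⟩, ⟨hE₂psd⟩⟩
  have hdiff := IsPosSemidef.tmul_sub_tmul (hE₁.compl₁₂_self L₁) (hE₂.smul hδ₂)
    (isPosSemidef_smul_sub_compl₁₂_self hE₁.isSymm hL₁)
    (isPosSemidef_smul_sub_compl₁₂_self hE₂.isSymm hL₂)
  have hf := hdiff.isNonneg.nonneg f
  rw [tmul_smul_smul, ← tmul_compl₁₂_map] at hf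
  simpa [sub_nonneg] using hf

/-- Submultiplicativity of tensor products of operators with respect to symmetric
positive semi-definite bilinear forms.  `E` is the bilinear form on `H₁ ⊗ H₂`
determined on simple tensors by `(E₁⊗E₂)(f₁⊗f₂, g₁⊗g₂) = E₁(f₁,g₁)·E₂(f₂,g₂)`. -/
theorem stmt_3 (H₁ H₂ : Type*)
    [AddCommGroup H₁] [Module ℝ H₁] [FiniteDimensional ℝ H₁]
    [AddCommGroup H₂] [Module ℝ H₂] [FiniteDimensional ℝ H₂]
    (E₁ : H₁ →ₗ[ℝ] H₁ →ₗ[ℝ] ℝ) (E₂ : H₂ →ₗ[ℝ] H₂ →ₗ[ℝ] ℝ)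
    (hE₁symm : ∀ v w, E₁ v w = E₁ w v) (hE₂symm : ∀ v w, E₂ v w = E₂ w v)
    (hE₁psd : ∀ v, 0 ≤ E₁ v v) (hE₂psd : ∀ v, 0 ≤ E₂ v v)
    (L₁ : H₁ →ₗ[ℝ] H₁) (L₂ : H₂ →ₗ[ℝ] H₂) (δ₁ δ₂ : ℝ)
    (hδ₁ : 0 ≤ δ₁) (hδ₂ : 0 ≤ δ₂)
    (hL₁ : ∀ f : H₁, E₁ (L₁ f) (L₁ f) ≤ δ₁ * E₁ f f)
    (hL₂ : ∀ f : H₂, E₂ (L₂ f) (L₂ f) ≤ δ₂ * E₂ f f)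
    (E : (H₁ ⊗[ℝ] H₂) →ₗ[ℝ] (H₁ ⊗[ℝ] H₂) →ₗ[ℝ] ℝ)
    (hE : ∀ (f₁ g₁ : H₁) (f₂ g₂ : H₂),
      E (f₁ ⊗ₜ f₂) (g₁ ⊗ₜ g₂) = E₁ f₁ g₁ * E₂ f₂ g₂) :
    ∀ f : H₁ ⊗[ℝ] H₂,
      E (TensorProduct.map L₁ L₂ f) (TensorProduct.map L₁ L₂ f) ≤ δ₁ * δ₂ * E f f :=
  stmt_3_general H₁ H₂ E₁ E₂ hE₁symm hE₂symm hE₁psd hE₂psd L₁ L₂ δ₁ δ₂ hδ₂ hL₁ hL₂ E hE
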